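/- There is a polynomial p such that every purely implicational formula ρ valid in minimal logic has a tree-like LM→ proof of the sequent ⇒ ρ whose height plus the total weight of the set of distinct formulas occurring in it is at most p(|ρ|) (i.e., ⇒ ρ has a quasi-polynomial tree-like LM→ proof). -/

import Mathlib

/-- Purely implicational formulas: built from propositional variables by `→`. -/
inductive Fml : Type
  | var : ℕ → Fml
  | imp : Fml → Fml → Fml
deriving DecidableEq

namespace Fml

/-- The weight of a formula: its total number of symbols. -/
def weight : Fml → ℕ
  | var _ => 1
  | imp a b => weight a + weight b + 1

/-- The (reflexive) subformula relation. -/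
inductive Sub : Fml → Fml → Prop
  | refl (φ : Fml) : Sub φ φ
  | impL {φ a b : Fml} : Sub φ a → Sub φ (imp a b)
  | impR {φ a b : Fml} : Sub φ b → Sub φ (imp a b)

/-- The antecedent of an implication (junk value on variables). -/
def antecedent : Fml → Fml
  | var n => var n
  | imp a _ => a

end Fml

/-- Tree-like natural deductions (with possible repetition nodes, i.e. NM→⁺-trees). -/
inductive DT : Type
  | leaf (φ : Fml)
  | impI (α β : Fml) (t : DT)
  | impE (α β : Fml) (t₁ t₂ : DT)
  | rep (φ : Fml) (ts : List DT)

namespace DT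

/-- The formula labelling the root of a deduction tree. -/
def label : DT → Fml
  | leaf φ => φ
  | impI α β _ => .imp α β
  | impE _ β _ _ => β
  | rep φ _ => φ

/-- Local correctness of a deduction tree w.r.t. the rules (→I), (→E), (R)ₙ (n ≥ 1). -/
inductive Correct : DT → Prop
  | leaf (φ : Fml) : Correct (leaf φ)
  | impI {α β : Fml} {t : DT} : t.label = β → Correct t → Correct (impI α β t)
  | impE {α β : Fml} {t₁ t₂ : DT} : t₁.label = α → t₂.label = .imp α β →
      Correct t₁ → Correct t₂ → Correct (impE α β t₁ t₂)
  | rep {φ : Fml} {ts : List DT} : ts ≠ [] → (∀ t ∈ ts, label t = φ) →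
      (∀ t ∈ ts, Correct t) → Correct (rep φ ts)

/-- A deduction lies in NM→ iff it uses no repetition rule. -/
inductive RepFree : DT → Prop
  | leaf (φ : Fml) : RepFree (leaf φ)
  | impI {α β : Fml} {t : DT} : RepFree t → RepFree (impI α β t)
  | impE {α β : Fml} {t₁ t₂ : DT} : RepFree t₁ → RepFree t₂ → RepFree (impE α β t₁ t₂)

/-- `ClosedUnder D t` : every deductive path of `t` from a leaf labelled `α` to the
root of `t` either contains the conclusion of an (→I)-inference discharging `α`, or
`α ∈ D` (the formulas discharged strictly below `t`).  With `D = ∅` this says that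
every deductive path of `t` is closed. -/
inductive ClosedUnder : Set Fml → DT → Prop
  | leaf {D : Set Fml} {φ : Fml} : φ ∈ D → ClosedUnder D (leaf φ)
  | impI {D : Set Fml} {α β : Fml} {t : DT} :
      ClosedUnder (insert α D) t → ClosedUnder D (impI α β t)
  | impE {D : Set Fml} {α β : Fml} {t₁ t₂ : DT} :
      ClosedUnder D t₁ → ClosedUnder D t₂ → ClosedUnder D (impE α β t₁ t₂)
  | rep {D : Set Fml} {φ : Fml} {ts : List DT} :
      (∀ t ∈ ts, ClosedUnder D t) → ClosedUnder D (rep φ ts)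

/-- The height of a deduction tree. -/
def height : DT → ℕ
  | leaf _ => 0
  | impI _ _ t => height t + 1
  | impE _ _ t₁ t₂ => max (height t₁) (height t₂) + 1
  | rep _ ts => (ts.attach.map fun t => height t.1).foldr max 0 + 1
decreasing_by
  all_goals simp_wf
  all_goals try have := List.sizeOf_lt_of_mem t.2
  all_goals omega

/-- The set of distinct formulas occurring in a deduction tree. -/
def formulas : DT → Finset Fml
  | leaf φ => {φ}
  | impI α β t => insert (.imp α β) (formulas t)
  | impE _ β t₁ t₂ => insert β (formulas t₁ ∪ formulas t₂)
  | rep φ ts => insert φ ((ts.attach.map fun t => formulas t.1).foldr (· ∪ ·) ∅)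
decreasing_by
  all_goals simp_wf
  all_goals try have := List.sizeOf_lt_of_mem t.2
  all_goals omega

/-- `φ(∂)`: the total weight of the set of distinct formulas occurring in `∂`. -/
def phi (t : DT) : ℕ := (t.formulas).sum Fml.weight

/-- The depths (= heights in the tree) of the leaves of a deduction tree. -/
def leafDepths : DT → List ℕ
  | leaf _ => [0]
  | impI _ _ t => (leafDepths t).map (· + 1)
  | impE _ _ t₁ t₂ => (leafDepths t₁ ++ leafDepths t₂).map (· + 1)
  | rep _ ts => ((ts.attach.map fun t => leafDepths t.1).flatten).map (· + 1)
decreasing_by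
  all_goals simp_wf
  all_goals try have := List.sizeOf_lt_of_mem t.2
  all_goals omega

/-- All leaves (top nodes) of the deduction have the same height. -/
def UniformLeaves (t : DT) : Prop := ∀ d ∈ t.leafDepths, d = t.height

/-- `t` is a tree-like NM→ proof of `ρ` : a locally correct, repetition-free tree
with conclusion `ρ`, all of whose deductive paths are closed. -/
def IsProofNM (t : DT) (ρ : Fml) : Prop :=
  t.RepFree ∧ t.Correct ∧ t.ClosedUnder ∅ ∧ t.label = ρ

/-- `t` is a tree-like NM→⁺ proof of `ρ`. -/
def IsProofNMPlus (t : DT) (ρ : Fml) : Prop :=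
  t.Correct ∧ t.ClosedUnder ∅ ∧ t.label = ρ

end DT

/-- `ρ` is valid in minimal logic iff it has a tree-like NM→ proof. -/
def MinValid (ρ : Fml) : Prop := ∃ t : DT, t.IsProofNM ρ

namespace Fml

/-- The set of propositional variables occurring in a formula. -/
def vars : Fml → Finset ℕ
  | var n => {n}
  | imp a b => a.vars ∪ b.vars

end Fml

/-- Tree-like deductions in Hudelmaier's cutfree sequent calculus LM→ for minimal
logic (sequents `Γ ⇒ α` with `Γ` a multiset of purely implicational formulas). -/
inductive LMT : Type
  | ax (Γ : Multiset Fml) (p : ℕ)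
  | i1 (Γ : Multiset Fml) (α β : Fml) (t : LMT)
  | i2 (Γ : Multiset Fml) (α β γ : Fml) (t : LMT)
  | eP (Γ : Multiset Fml) (p : ℕ) (γ : Fml) (q : ℕ) (t : LMT)
  | eE (Γ : Multiset Fml) (α β γ : Fml) (q : ℕ) (t₁ t₂ : LMT)

namespace LMT

/-- The antecedent of the end-sequent. -/
def ante : LMT → Multiset Fml
  | ax Γ p => (Fml.var p) ::ₘ Γ
  | i1 Γ _ _ _ => Γ
  | i2 Γ α β γ _ => (Fml.imp (.imp α β) γ) ::ₘ Γ
  | eP Γ p γ _ _ => (Fml.var p) ::ₘ (Fml.imp (.var p) γ) ::ₘ Γ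
  | eE Γ α β γ _ _ _ => (Fml.imp (.imp α β) γ) ::ₘ Γ

/-- The succedent of the end-sequent. -/
def succ : LMT → Fml
  | ax _ p => .var p
  | i1 _ α β _ => .imp α β
  | i2 _ α β _ _ => .imp α β
  | eP _ _ _ q _ => .var q
  | eE _ _ _ _ q _ _ => .var q

/-- `q ∈ VAR(Γ, γ)`. -/
def inVars (q : ℕ) (Γ : Multiset Fml) (γ : Fml) : Prop :=
  q ∈ γ.vars ∨ ∃ δ ∈ Γ, q ∈ δ.vars

/-- Local correctness of an LM→ deduction tree (rules (MA), (MI1→), (MI2→),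
(ME→P), (ME→→), with their side constraints). -/
inductive Correct : LMT → Prop
  | ax (Γ : Multiset Fml) (p : ℕ) : Correct (ax Γ p)
  | i1 {Γ : Multiset Fml} {α β : Fml} {t : LMT} :
      Correct t → t.ante = α ::ₘ Γ → t.succ = β →
      (∀ γ : Fml, Fml.imp (.imp α β) γ ∉ Γ) → Correct (i1 Γ α β t)
  | i2 {Γ : Multiset Fml} {α β γ : Fml} {t : LMT} :
      Correct t → t.ante = α ::ₘ (Fml.imp β γ) ::ₘ Γ → t.succ = β →
      Correct (i2 Γ α β γ t)
  | eP {Γ : Multiset Fml} {p : ℕ} {γ : Fml} {q : ℕ} {t : LMT} :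
      Correct t → t.ante = (Fml.var p) ::ₘ γ ::ₘ Γ → t.succ = .var q →
      inVars q Γ γ → p ≠ q → Correct (eP Γ p γ q t)
  | eE {Γ : Multiset Fml} {α β γ : Fml} {q : ℕ} {t₁ t₂ : LMT} :
      Correct t₁ → Correct t₂ →
      t₁.ante = α ::ₘ (Fml.imp β γ) ::ₘ Γ → t₁.succ = β →
      t₂.ante = γ ::ₘ Γ → t₂.succ = .var q →
      inVars q Γ γ → Correct (eE Γ α β γ q t₁ t₂)

/-- The height of an LM→ deduction tree. -/
def height : LMT → ℕ
  | ax _ _ => 0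
  | i1 _ _ _ t => t.height + 1
  | i2 _ _ _ _ t => t.height + 1
  | eP _ _ _ _ t => t.height + 1
  | eE _ _ _ _ _ t₁ t₂ => max t₁.height t₂.height + 1

/-- The set of distinct formulas occurring (in the sequents) of an LM→ deduction. -/
def formulas : LMT → Finset Fml
  | t@(ax _ _) => insert t.succ t.ante.toFinset
  | t@(i1 _ _ _ s) => insert t.succ t.ante.toFinset ∪ formulas s
  | t@(i2 _ _ _ _ s) => insert t.succ t.ante.toFinset ∪ formulas s
  | t@(eP _ _ _ _ s) => insert t.succ t.ante.toFinset ∪ formulas s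
  | t@(eE _ _ _ _ _ s₁ s₂) => insert t.succ t.ante.toFinset ∪ formulas s₁ ∪ formulas s₂

/-- The total weight of the set of distinct formulas occurring in an LM→ deduction. -/
def phi (t : LMT) : ℕ := (t.formulas).sum Fml.weight

end LMT

/-!
NM→ proofs are sound for Kripke models, so a valid `ρ` has no Kripke countermodel. Backward
proof search in LM→ on `Γ ⇒ δ`, by induction on a weight measure that every rule decreases,
either builds a deduction whose height is at most that measure or finds a countermodel; for an
atomic succedent to which no rule applies, countermodels of the left premises of the
(ME→→)-instances are glued below a new root. For `⇒ ρ` the measure is `|ρ|`, and every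
formula in the deduction is a subformula of `ρ` or an implication between two of them, so the
formulas have total weight `O(|ρ|³)`.
-/

namespace Fml

lemma one_le_weight (φ : Fml) : 1 ≤ φ.weight := by
  cases φ <;> simp [weight]

def subformulas : Fml → Finset Fml
  | var n => {var n}
  | imp a b => insert (imp a b) (subformulas a ∪ subformulas b)

lemma mem_subformulas_self (φ : Fml) : φ ∈ φ.subformulas := by
  cases φ <;> simp [subformulas]

lemma subformulas_subset_of_mem {φ ψ : Fml} (h : φ ∈ ψ.subformulas) :
    φ.subformulas ⊆ ψ.subformulas := by
  induction ψ with
  | var n => simp_all [subformulas]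
  | imp a b iha ihb =>
    simp only [subformulas, Finset.mem_insert, Finset.mem_union] at h
    rcases h with rfl | h | h
    · rfl
    · exact (iha h).trans fun x hx => by simp [subformulas, hx]
    · exact (ihb h).trans fun x hx => by simp [subformulas, hx]

lemma left_mem_subformulas {a b ρ : Fml} (h : imp a b ∈ ρ.subformulas) : a ∈ ρ.subformulas :=
  subformulas_subset_of_mem h (by simp [subformulas, mem_subformulas_self])

lemma right_mem_subformulas {a b ρ : Fml} (h : imp a b ∈ ρ.subformulas) : b ∈ ρ.subformulas :=
  subformulas_subset_of_mem h (by simp [subformulas, mem_subformulas_self])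

lemma weight_le_of_mem_subformulas {φ ψ : Fml} (h : φ ∈ ψ.subformulas) : φ.weight ≤ ψ.weight := by
  induction ψ with
  | var n => simp_all [subformulas]
  | imp a b iha ihb =>
    simp only [subformulas, Finset.mem_insert, Finset.mem_union] at h
    rcases h with rfl | h | h
    · rfl
    · exact (iha h).trans (by simp only [weight]; omega)
    · exact (ihb h).trans (by simp only [weight]; omega)

lemma card_subformulas_le (φ : Fml) : φ.subformulas.card ≤ φ.weight := by
  induction φ with
  | var n => simp [subformulas, weight]
  | imp a b iha ihb =>
    calc (subformulas (imp a b)).card ≤ (a.subformulas ∪ b.subformulas).card + 1 :=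
          Finset.card_insert_le _ _
      _ ≤ a.subformulas.card + b.subformulas.card + 1 := by
          gcongr; exact Finset.card_union_le _ _
      _ ≤ (imp a b).weight := by simp only [weight]; omega

/-- Besides subformulas, the rules (MI2→) and (ME→→) create `β → γ` from `(α → β) → γ`. -/
def genSubformulas (ρ : Fml) : Finset Fml :=
  ρ.subformulas ∪ Finset.image₂ imp ρ.subformulas ρ.subformulas

lemma mem_genSubformulas_self (ρ : Fml) : ρ ∈ ρ.genSubformulas :=
  Finset.mem_union_left _ (mem_subformulas_self ρ)

lemma imp_mem_genSubformulas {a b ρ : Fml} (ha : a ∈ ρ.subformulas) (hb : b ∈ ρ.subformulas) :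
    imp a b ∈ ρ.genSubformulas :=
  Finset.mem_union_right _ (Finset.mem_image₂_of_mem ha hb)

lemma mem_subformulas_of_imp_mem_genSubformulas {a b ρ : Fml}
    (h : imp a b ∈ ρ.genSubformulas) : a ∈ ρ.subformulas ∧ b ∈ ρ.subformulas := by
  simp only [genSubformulas, Finset.mem_union, Finset.mem_image₂, imp.injEq] at h
  rcases h with h | ⟨x, hx, y, hy, rfl, rfl⟩
  exacts [⟨left_mem_subformulas h, right_mem_subformulas h⟩, ⟨hx, hy⟩]

lemma mem_genSubformulas_of_imp {a b ρ : Fml} (h : imp a b ∈ ρ.genSubformulas) :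
    a ∈ ρ.genSubformulas ∧ b ∈ ρ.genSubformulas :=
  (mem_subformulas_of_imp_mem_genSubformulas h).imp (Finset.mem_union_left _)
    (Finset.mem_union_left _)

lemma imp_mem_genSubformulas_of_imp_imp {a b c ρ : Fml}
    (h : imp (imp a b) c ∈ ρ.genSubformulas) : imp b c ∈ ρ.genSubformulas :=
  have ⟨hab, hc⟩ := mem_subformulas_of_imp_mem_genSubformulas h
  imp_mem_genSubformulas (right_mem_subformulas hab) hc

lemma sum_weight_genSubformulas_le (ρ : Fml) :
    ∑ φ ∈ ρ.genSubformulas, φ.weight ≤ (ρ.weight + ρ.weight ^ 2) * (2 * ρ.weight + 1) := by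
  have hweight : ∀ φ ∈ ρ.genSubformulas, φ.weight ≤ 2 * ρ.weight + 1 := by
    simp only [genSubformulas, Finset.mem_union, Finset.mem_image₂]
    rintro φ (h | ⟨a, ha, b, hb, rfl⟩)
    · have := weight_le_of_mem_subformulas h; omega
    · have := weight_le_of_mem_subformulas ha
      have := weight_le_of_mem_subformulas hb
      simp only [weight]; omega
  have hcard : ρ.genSubformulas.card ≤ ρ.weight + ρ.weight ^ 2 :=
    calc ρ.genSubformulas.card
        ≤ ρ.subformulas.card + ρ.subformulas.card * ρ.subformulas.card :=
          (Finset.card_union_le _ _).trans (by gcongr; exact Finset.card_image₂_le _ _ _)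
      _ ≤ ρ.weight + ρ.weight ^ 2 := by
          have := card_subformulas_le ρ; rw [sq]; gcongr
  calc ∑ φ ∈ ρ.genSubformulas, φ.weight ≤ ρ.genSubformulas.card * (2 * ρ.weight + 1) :=
        Finset.sum_le_card_nsmul _ _ _ hweight
    _ ≤ _ := by gcongr

section Kripke

variable {W W' : Type*} [Preorder W] [Preorder W']

def Forces (V : W → ℕ → Prop) : Fml → W → Prop
  | var n, w => V w n
  | imp a b, w => ∀ w', w ≤ w' → a.Forces V w' → b.Forces V w'

variable {V : W → ℕ → Prop}

lemma Forces.mono (hV : Monotone V) {φ : Fml} {w w' : W} (hw : w ≤ w') (h : φ.Forces V w) :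
    φ.Forces V w' := by
  cases φ with
  | var n => exact hV hw n h
  | imp a b => exact fun u hu ha => h u (hw.trans hu) ha

lemma Forces.mp {a b : Fml} {w : W} (h : (imp a b).Forces V w) (ha : a.Forces V w) :
    b.Forces V w :=
  h w le_rfl ha

lemma Forces.imp_of_right (hV : Monotone V) (a : Fml) {b : Fml} {w : W} (h : b.Forces V w) :
    (imp a b).Forces V w :=
  fun _ hw _ => h.mono hV hw

lemma Forces.imp_imp (hV : Monotone V) {a b c : Fml} {w : W} (ha : a.Forces V w)
    (hbc : (imp b c).Forces V w) : (imp (imp a b) c).Forces V w :=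
  fun _ hw hab => (hbc.mono hV hw).mp (hab.mp (ha.mono hV hw))

/-- Invariance of forcing under bounded morphisms. -/
lemma forces_comp_iff {V' : W' → ℕ → Prop} (f : W → W') (hf : Monotone f)
    (hback : ∀ u w', f u ≤ w' → ∃ v, u ≤ v ∧ f v = w') (φ : Fml) (u : W) :
    φ.Forces (fun w => V' (f w)) u ↔ φ.Forces V' (f u) := by
  induction φ generalizing u with
  | var n => rfl
  | imp a b iha ihb =>
    constructor
    · intro h w' hw' ha
      obtain ⟨v, huv, rfl⟩ := hback u w' hw'
      exact (ihb v).1 (h v huv ((iha v).2 ha))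
    · exact fun h v huv ha => (ihb v).2 (h (f v) (hf huv) ((iha v).1 ha))

lemma forces_of_not_mem_vars {q : ℕ} {φ : Fml} (h : q ∉ φ.vars) :
    φ.Forces (fun (_ : Unit) n => n ≠ q) () := by
  induction φ with
  | var n => exact fun hn => h (by simp [vars, hn])
  | imp a b _ ihb =>
    simp only [vars, Finset.mem_union, not_or] at h
    exact fun _ _ _ => ihb h.2

end Kripke

end Fml

def Refutable (Γ : Multiset Fml) (δ : Fml) : Prop :=
  ∃ (W : Type) (_ : Preorder W) (V : W → ℕ → Prop) (w : W),
    Monotone V ∧ (∀ φ ∈ Γ, φ.Forces V w) ∧ ¬ δ.Forces V w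

theorem DT.ClosedUnder.forces_label {W : Type*} [Preorder W] {V : W → ℕ → Prop}
    (hV : Monotone V) {D : Set Fml} {t : DT} (h : t.ClosedUnder D) (hc : t.Correct) {w : W}
    (hD : ∀ α ∈ D, α.Forces V w) : t.label.Forces V w := by
  induction h generalizing w with
  | leaf hm => exact hD _ hm
  | impI _ ih =>
    cases hc with
    | impI hl hct =>
      refine fun w' hw' ha => hl ▸ ih hct ?_
      rintro δ (rfl | hδ)
      exacts [ha, (hD δ hδ).mono hV hw']
  | impE _ _ ih₁ ih₂ =>
    cases hc with
    | impE hl₁ hl₂ hc₁ hc₂ =>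
      have h₂ := ih₂ hc₂ hD
      rw [hl₂] at h₂
      exact h₂.mp (hl₁ ▸ ih₁ hc₁ hD)
  | rep _ ih =>
    cases hc with
    | rep hne hl hcs =>
      obtain ⟨t₀, ht₀⟩ := List.exists_mem_of_ne_nil _ hne
      exact hl t₀ ht₀ ▸ ih t₀ ht₀ (hcs t₀ ht₀) hD

theorem MinValid.not_refutable {ρ : Fml} (h : MinValid ρ) : ¬ Refutable 0 ρ := by
  rintro ⟨W, _, V, w, hV, -, hρ⟩
  obtain ⟨t, -, hc, hcl, rfl⟩ := h
  exact hρ (hcl.forces_label hV hc (by simp))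

namespace Refutable

variable {Γ : Multiset Fml}

lemma imp_intro {α β : Fml} (h : Refutable (α ::ₘ Γ) β) : Refutable Γ (.imp α β) := by
  obtain ⟨W, _, V, w, hV, hΓ, hβ⟩ := h
  exact ⟨W, _, V, w, hV, fun φ hφ => hΓ φ (by simp [hφ]),
    fun h => hβ (h.mp (hΓ α (by simp)))⟩

lemma imp_imp {α β γ : Fml} (h : Refutable (α ::ₘ .imp β γ ::ₘ Γ) β) :
    Refutable (.imp (.imp α β) γ ::ₘ Γ) (.imp α β) := by
  obtain ⟨W, _, V, w, hV, hΓ, hβ⟩ := h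
  have hα : α.Forces V w := hΓ α (by simp)
  refine ⟨W, _, V, w, hV, ?_, fun h => hβ (h.mp hα)⟩
  simp only [Multiset.mem_cons, forall_eq_or_imp] at hΓ ⊢
  exact ⟨hα.imp_imp hV hΓ.2.1, hΓ.2.2⟩

lemma imp_of_cons {α γ δ : Fml} (h : Refutable (γ ::ₘ Γ) δ) :
    Refutable (.imp α γ ::ₘ Γ) δ := by
  obtain ⟨W, _, V, w, hV, hΓ, hδ⟩ := h
  refine ⟨W, _, V, w, hV, ?_, hδ⟩
  simp only [Multiset.mem_cons, forall_eq_or_imp] at hΓ ⊢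
  exact ⟨hΓ.1.imp_of_right hV α, hΓ.2⟩

lemma var_imp {p : ℕ} {γ δ : Fml} (h : Refutable (.var p ::ₘ γ ::ₘ Γ) δ) :
    Refutable (.var p ::ₘ .imp (.var p) γ ::ₘ Γ) δ := by
  rw [Multiset.cons_swap] at h ⊢
  exact h.imp_of_cons

lemma of_not_mem_vars {q : ℕ} (h : ∀ φ ∈ Γ, q ∉ φ.vars) : Refutable Γ (.var q) :=
  ⟨Unit, inferInstance, fun _ n => n ≠ q, (), fun _ _ _ => le_rfl,
    fun φ hφ => Fml.forces_of_not_mem_vars (h φ hφ), fun h => h rfl⟩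

end Refutable

section Glue

variable {ι : Type*} {W : ι → Type*} [∀ i, Preorder (W i)]
  (V : ∀ i, W i → ℕ → Prop) (pt : ∀ i, W i) (rv : ℕ → Prop)

/-- The valuation on the model obtained by putting a new root, with atoms `rv`, below the
cones of the points `pt i`. -/
def glueVal : WithBot (Σ i, Set.Ici (pt i)) → ℕ → Prop :=
  WithBot.recBotCoe rv fun x => V x.1 x.2

lemma monotone_glueVal (hV : ∀ i, Monotone (V i)) (hrv : ∀ i n, rv n → V i (pt i) n) :
    Monotone (glueVal V pt rv) := by
  intro w w' h
  induction w using WithBot.recBotCoe with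
  | bot =>
    induction w' using WithBot.recBotCoe with
    | bot => exact le_rfl
    | coe x => exact fun n hn => hV x.1 x.2.2 n (hrv x.1 n hn)
  | coe x =>
    obtain ⟨y, rfl, hxy⟩ := WithBot.coe_le_iff.1 h
    obtain ⟨i, u, v, huv⟩ := hxy
    exact hV i huv

lemma forces_glueVal_coe_iff (φ : Fml) (i : ι) (u : Set.Ici (pt i)) :
    φ.Forces (glueVal V pt rv) ((⟨i, u⟩ : Σ i, Set.Ici (pt i)) : WithBot _) ↔
      φ.Forces (V i) u.1 := by
  have hcone := Fml.forces_comp_iff (V' := V i) Subtype.val (fun _ _ h => h)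
    (fun u w' h => ⟨⟨w', u.2.trans h⟩, h, rfl⟩) φ u
  have hroot := Fml.forces_comp_iff (V' := glueVal V pt rv)
    (fun u : Set.Ici (pt i) => ((⟨i, u⟩ : Σ j, Set.Ici (pt j)) : WithBot (Σ j, Set.Ici (pt j))))
    (fun _ _ h => WithBot.coe_le_coe.2 (Sigma.mk_le_mk_iff.2 h)) ?_ φ u
  · exact hroot.symm.trans hcone
  intro u w' h
  obtain ⟨_, rfl, _, _, v, huv⟩ := WithBot.coe_le_iff.1 h
  exact ⟨v, huv, rfl⟩

end Glue

/-- The countermodel is a new root, forcing exactly the atoms of `Γ`, placed below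
countermodels of all refutable `Γ ⇒ ψ`; by `H` and `hP` the root forces no antecedent of an
implication in `Γ`. -/
theorem Refutable.var_of_forall_imp_imp {Γ : Multiset Fml} {q : ℕ} (hq : .var q ∉ Γ)
    (hP : ∀ p γ, .var p ∈ Γ → .imp (.var p) γ ∉ Γ)
    (H : ∀ a b c, .imp (.imp a b) c ∈ Γ → Refutable Γ (.imp a b)) : Refutable Γ (.var q) := by
  choose W _ V pt hV hΓ hrefute using fun ψ : {ψ : Fml // Refutable Γ ψ} => ψ.2
  let rv : ℕ → Prop := fun n => .var n ∈ Γ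
  have hG := monotone_glueVal V pt rv hV fun i n hn => hΓ i _ hn
  refine ⟨_, inferInstance, glueVal V pt rv, ⊥, hG, fun φ hφ => ?_, hq⟩
  have habove (x : Σ i, Set.Ici (pt i)) : φ.Forces (glueVal V pt rv) x :=
    (forces_glueVal_coe_iff V pt rv φ x.1 x.2).2 ((hΓ x.1 φ hφ).mono (hV x.1) x.2.2)
  cases φ with
  | var n => exact hφ
  | imp ψ χ =>
    intro w _ hψ
    induction w using WithBot.recBotCoe with
    | coe x => exact (habove x).mp hψ
    | bot =>
      exfalso
      cases ψ with
      | var p => exact hP p χ hψ hφ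
      | imp a b =>
        let i : {ψ // Refutable Γ ψ} := ⟨_, H a b χ hφ⟩
        exact hrefute i ((forces_glueVal_coe_iff V pt rv _ i ⟨pt i, le_rfl⟩).1
          (hψ.mono hG bot_le))

namespace LMT

def anteWeight (Γ : Multiset Fml) : ℕ := (Γ.map Fml.weight).sum

@[simp] lemma anteWeight_zero : anteWeight 0 = 0 := rfl

@[simp] lemma anteWeight_cons (φ : Fml) (Γ : Multiset Fml) :
    anteWeight (φ ::ₘ Γ) = φ.weight + anteWeight Γ := by
  simp [anteWeight]

open Classical in
/-- A succedent `δ` counts `1` when `Γ` contains an implication `δ → γ`: then the left premise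
of (MI2→) and (ME→→), with succedent `β` next to `β → γ`, is lighter than the conclusion. -/
noncomputable def succMeasure (Γ : Multiset Fml) (δ : Fml) : ℕ :=
  if ∃ γ, .imp δ γ ∈ Γ then 1 else δ.weight

noncomputable def measure (Γ : Multiset Fml) (δ : Fml) : ℕ := anteWeight Γ + succMeasure Γ δ

lemma one_le_succMeasure (Γ : Multiset Fml) (δ : Fml) : 1 ≤ succMeasure Γ δ := by
  unfold succMeasure; split_ifs
  exacts [le_rfl, δ.one_le_weight]

lemma succMeasure_le_weight (Γ : Multiset Fml) (δ : Fml) : succMeasure Γ δ ≤ δ.weight := by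
  unfold succMeasure; split_ifs
  exacts [δ.one_le_weight, le_rfl]

lemma succMeasure_eq_weight {Γ : Multiset Fml} {δ : Fml} (h : ∀ γ, .imp δ γ ∉ Γ) :
    succMeasure Γ δ = δ.weight := by
  simp [succMeasure, h]

lemma succMeasure_cons_imp (α β γ : Fml) (Γ : Multiset Fml) :
    succMeasure (α ::ₘ .imp β γ ::ₘ Γ) β = 1 :=
  by rw [succMeasure, if_pos ⟨γ, by simp⟩]

lemma succMeasure_var (Γ : Multiset Fml) (q : ℕ) : succMeasure Γ (.var q) = 1 :=
  le_antisymm (succMeasure_le_weight _ _) (one_le_succMeasure _ _)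

lemma measure_zero (ρ : Fml) : measure 0 ρ = ρ.weight := by
  simp [measure, succMeasure]

lemma measure_imp_intro_lt {Γ : Multiset Fml} {α β : Fml} (h : ∀ γ, .imp (.imp α β) γ ∉ Γ) :
    measure (α ::ₘ Γ) β < measure Γ (.imp α β) := by
  have := succMeasure_le_weight (α ::ₘ Γ) β
  simp only [measure, anteWeight_cons, succMeasure_eq_weight h, Fml.weight]
  omega

lemma measure_imp_imp_lt (Γ : Multiset Fml) (α β γ δ : Fml) :
    measure (α ::ₘ .imp β γ ::ₘ Γ) β < measure (.imp (.imp α β) γ ::ₘ Γ) δ := by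
  have := one_le_succMeasure (.imp (.imp α β) γ ::ₘ Γ) δ
  simp only [measure, anteWeight_cons, succMeasure_cons_imp, Fml.weight]
  omega

lemma measure_var_imp_lt (Γ : Multiset Fml) (p q : ℕ) (γ : Fml) :
    measure (.var p ::ₘ γ ::ₘ Γ) (.var q) <
      measure (.var p ::ₘ .imp (.var p) γ ::ₘ Γ) (.var q) := by
  simp only [measure, anteWeight_cons, succMeasure_var, Fml.weight]
  omega

lemma measure_cons_lt_imp (Γ : Multiset Fml) (α γ : Fml) (q : ℕ) :
    measure (γ ::ₘ Γ) (.var q) < measure (.imp α γ ::ₘ Γ) (.var q) := by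
  have := α.one_le_weight
  simp only [measure, anteWeight_cons, succMeasure_var, Fml.weight]
  omega

def Derivable (Γ : Multiset Fml) (δ : Fml) : Prop :=
  ∃ t : LMT, t.Correct ∧ t.ante = Γ ∧ t.succ = δ ∧ t.height ≤ measure Γ δ

namespace Derivable

variable {Γ : Multiset Fml}

lemma ax {q : ℕ} (h : .var q ∈ Γ) : Derivable Γ (.var q) := by
  obtain ⟨Γ', rfl⟩ := Multiset.exists_cons_of_mem h
  exact ⟨ax Γ' q, .ax Γ' q, rfl, rfl, Nat.zero_le _⟩

lemma imp_intro {α β : Fml} (hΓ : ∀ γ, .imp (.imp α β) γ ∉ Γ) (h : Derivable (α ::ₘ Γ) β) :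
    Derivable Γ (.imp α β) := by
  obtain ⟨t, hc, ha, hs, hh⟩ := h
  exact ⟨i1 Γ α β t, .i1 hc ha hs hΓ, rfl, rfl, by
    have := measure_imp_intro_lt hΓ; simp only [height]; omega⟩

lemma imp_imp {α β γ : Fml} (h : Derivable (α ::ₘ .imp β γ ::ₘ Γ) β) :
    Derivable (.imp (.imp α β) γ ::ₘ Γ) (.imp α β) := by
  obtain ⟨t, hc, ha, hs, hh⟩ := h
  exact ⟨i2 Γ α β γ t, .i2 hc ha hs, rfl, rfl, by
    have := measure_imp_imp_lt Γ α β γ (.imp α β); simp only [height]; omega⟩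

lemma var_imp {p q : ℕ} {γ : Fml} (hv : inVars q Γ γ) (hpq : p ≠ q)
    (h : Derivable (.var p ::ₘ γ ::ₘ Γ) (.var q)) :
    Derivable (.var p ::ₘ .imp (.var p) γ ::ₘ Γ) (.var q) := by
  obtain ⟨t, hc, ha, hs, hh⟩ := h
  refine ⟨eP Γ p γ q t, .eP hc ha hs hv hpq, rfl, rfl, ?_⟩
  have := measure_var_imp_lt Γ p q γ
  simp only [height]; omega

lemma imp_imp_var {α β γ : Fml} {q : ℕ} (hv : inVars q Γ γ)
    (h₁ : Derivable (α ::ₘ .imp β γ ::ₘ Γ) β) (h₂ : Derivable (γ ::ₘ Γ) (.var q)) :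
    Derivable (.imp (.imp α β) γ ::ₘ Γ) (.var q) := by
  obtain ⟨t₁, hc₁, ha₁, hs₁, hh₁⟩ := h₁
  obtain ⟨t₂, hc₂, ha₂, hs₂, hh₂⟩ := h₂
  refine ⟨eE Γ α β γ q t₁ t₂, .eE hc₁ hc₂ ha₁ hs₁ ha₂ hs₂ hv, rfl, rfl, ?_⟩
  have := measure_imp_imp_lt Γ α β γ (.var q)
  have := measure_cons_lt_imp Γ (.imp α β) γ q
  simp only [height]; omega

end Derivable

variable {Γ : Multiset Fml}

lemma derivable_or_refutable_imp {α β : Fml}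
    (IH : ∀ Γ' δ', measure Γ' δ' < measure Γ (.imp α β) → Derivable Γ' δ' ∨ Refutable Γ' δ') :
    Derivable Γ (.imp α β) ∨ Refutable Γ (.imp α β) := by
  by_cases hΓ : ∃ γ, .imp (.imp α β) γ ∈ Γ
  · obtain ⟨γ, hγ⟩ := hΓ
    obtain ⟨Γ', rfl⟩ := Multiset.exists_cons_of_mem hγ
    exact (IH _ _ (measure_imp_imp_lt _ _ _ _ _)).imp Derivable.imp_imp Refutable.imp_imp
  · push Not at hΓ
    exact (IH _ _ (measure_imp_intro_lt hΓ)).imp (Derivable.imp_intro hΓ) Refutable.imp_intro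

lemma derivable_or_refutable_var_imp {p q : ℕ} {γ : Fml} (hpq : p ≠ q)
    (IH : ∀ Γ' δ', measure Γ' δ' < measure (.var p ::ₘ .imp (.var p) γ ::ₘ Γ) (.var q) →
      Derivable Γ' δ' ∨ Refutable Γ' δ') :
    Derivable (.var p ::ₘ .imp (.var p) γ ::ₘ Γ) (.var q) ∨
      Refutable (.var p ::ₘ .imp (.var p) γ ::ₘ Γ) (.var q) := by
  by_cases hv : inVars q Γ γ
  · exact (IH _ _ (measure_var_imp_lt Γ p q γ)).imp (Derivable.var_imp hv hpq) Refutable.var_imp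
  · refine .inr (Refutable.var_imp (Refutable.of_not_mem_vars ?_))
    simpa [inVars, Fml.vars, hpq.symm] using hv

lemma derivable_or_refutable_var {q : ℕ}
    (IH : ∀ Γ' δ', measure Γ' δ' < measure Γ (.var q) → Derivable Γ' δ' ∨ Refutable Γ' δ') :
    Derivable Γ (.var q) ∨ Refutable Γ (.var q) := by
  by_cases hq : .var q ∈ Γ
  · exact .inl (.ax hq)
  by_cases hP : ∃ p γ, .var p ∈ Γ ∧ .imp (.var p) γ ∈ Γ
  · obtain ⟨p, γ, hp, hpγ⟩ := hP
    obtain ⟨Γ', rfl⟩ := Multiset.exists_cons_of_mem hp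
    obtain ⟨Γ'', rfl⟩ := Multiset.exists_cons_of_mem ((Multiset.mem_cons.1 hpγ).resolve_left
      Fml.noConfusion)
    exact derivable_or_refutable_var_imp (by rintro rfl; exact hq hp) IH
  push Not at hP
  by_cases hR : Refutable Γ (.var q)
  · exact .inr hR
  by_cases hD : Derivable Γ (.var q)
  · exact .inl hD
  refine .inr (Refutable.var_of_forall_imp_imp hq hP fun a b c habc => ?_)
  obtain ⟨Γ', rfl⟩ := Multiset.exists_cons_of_mem habc
  have hv : inVars q Γ' c := by
    by_contra hv
    exact hR (Refutable.of_not_mem_vars (by simpa [inVars] using hv)).imp_of_cons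
  have h₂ := (IH _ _ (measure_cons_lt_imp _ _ _ _)).resolve_right fun h => hR h.imp_of_cons
  exact ((IH _ _ (measure_imp_imp_lt _ _ _ _ _)).resolve_left
    fun h₁ => hD (h₁.imp_imp_var hv h₂)).imp_imp

theorem derivable_or_refutable (Γ : Multiset Fml) (δ : Fml) :
    Derivable Γ δ ∨ Refutable Γ δ := by
  cases δ with
  | var q => exact derivable_or_refutable_var fun Γ' δ' _ => derivable_or_refutable Γ' δ'
  | imp α β => exact derivable_or_refutable_imp fun Γ' δ' _ => derivable_or_refutable Γ' δ'
termination_by measure Γ δ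

lemma insert_succ_ante_subset {S : Finset Fml} {t : LMT} (hante : ∀ φ ∈ t.ante, φ ∈ S)
    (hsucc : t.succ ∈ S) : insert t.succ t.ante.toFinset ⊆ S :=
  Finset.insert_subset hsucc fun φ h => hante φ (Multiset.mem_toFinset.1 h)

theorem Correct.formulas_subset {S : Finset Fml}
    (hS : ∀ a b, .imp a b ∈ S → a ∈ S ∧ b ∈ S)
    (hS' : ∀ a b c, .imp (.imp a b) c ∈ S → .imp b c ∈ S)
    {t : LMT} (hc : t.Correct) (hante : ∀ φ ∈ t.ante, φ ∈ S) (hsucc : t.succ ∈ S) :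
    t.formulas ⊆ S := by
  induction hc with
  | ax => exact insert_succ_ante_subset hante hsucc
  | i1 _ ha hs _ ih =>
    obtain ⟨hα, hβ⟩ := hS _ _ hsucc
    refine Finset.union_subset (insert_succ_ante_subset hante hsucc) (ih ?_ (hs ▸ hβ))
    simpa only [ha, Multiset.forall_mem_cons] using ⟨hα, hante⟩
  | i2 _ ha hs ih =>
    obtain ⟨hαβγ, hΓ⟩ := Multiset.forall_mem_cons.1 hante
    obtain ⟨hα, hβ⟩ := hS _ _ (hS _ _ hαβγ).1
    refine Finset.union_subset (insert_succ_ante_subset hante hsucc) (ih ?_ (hs ▸ hβ))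
    simpa only [ha, Multiset.forall_mem_cons] using ⟨hα, hS' _ _ _ hαβγ, hΓ⟩
  | eP _ ha hs _ _ ih =>
    obtain ⟨hp, hpγ, hΓ⟩ : _ ∧ _ ∧ _ := by
      simpa only [ante, Multiset.forall_mem_cons] using hante
    refine Finset.union_subset (insert_succ_ante_subset hante hsucc) (ih ?_ (hs ▸ hsucc))
    simpa only [ha, Multiset.forall_mem_cons] using ⟨hp, (hS _ _ hpγ).2, hΓ⟩
  | eE _ _ ha₁ hs₁ ha₂ hs₂ _ ih₁ ih₂ =>
    obtain ⟨hαβγ, hΓ⟩ := Multiset.forall_mem_cons.1 hante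
    obtain ⟨hαβ, hγ⟩ := hS _ _ hαβγ
    obtain ⟨hα, hβ⟩ := hS _ _ hαβ
    refine Finset.union_subset (Finset.union_subset (insert_succ_ante_subset hante hsucc)
      (ih₁ ?_ (hs₁ ▸ hβ))) (ih₂ ?_ (hs₂ ▸ hsucc))
    · simpa only [ha₁, Multiset.forall_mem_cons] using ⟨hα, hS' _ _ _ hαβγ, hΓ⟩
    · simpa only [ha₂, Multiset.forall_mem_cons] using ⟨hγ, hΓ⟩

end LMT

/-- There is a polynomial `p` such that every purely implicational formula `ρ` valid
in minimal logic has a tree-like LM→ proof of the sequent `⇒ ρ` whose height plus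
the total weight of the set of distinct formulas occurring in it is at most
`p(|ρ|)` (a quasi-polynomial tree-like LM→ proof). -/
theorem LM_quasiPolynomial_proofs :
    ∃ p : Polynomial ℕ, ∀ ρ : Fml, MinValid ρ →
      ∃ t : LMT, t.Correct ∧ t.ante = 0 ∧ t.succ = ρ ∧
        t.height + t.phi ≤ p.eval ρ.weight := by
  open Polynomial in
  refine ⟨X + (X + X ^ 2) * (2 * X + 1), fun ρ hρ => ?_⟩
  obtain ⟨t, hc, hante, rfl, hheight⟩ :=
    (LMT.derivable_or_refutable 0 ρ).resolve_right hρ.not_refutable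
  refine ⟨t, hc, hante, rfl, ?_⟩
  have hformulas : t.formulas ⊆ t.succ.genSubformulas :=
    hc.formulas_subset (fun _ _ => Fml.mem_genSubformulas_of_imp)
      (fun _ _ _ => Fml.imp_mem_genSubformulas_of_imp_imp) (by simp [hante])
      (Fml.mem_genSubformulas_self _)
  have hphi : t.phi ≤ _ :=
    (Finset.sum_le_sum_of_subset hformulas).trans (Fml.sum_weight_genSubformulas_le _)
  rw [LMT.measure_zero] at hheight
  simpa using add_le_add hheight hphi
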